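/- arXiv:1801.06344 — 3 statements merged into one kernel-verified Lean document; each statement's English description precedes it below -/
import Mathlib

section
/- Let T be a triangulated category and X• : X_0 → X_1 → ⋯ → X_n a complex in T (composition of consecutive maps is zero). If T(X_a, X_b)_{-(b-a)+2} = 0 for all b ≥ a+3, then X• extends to a Postnikov system. If moreover T(X_a, X_b)_{-(b-a)+1} = 0 for all b ≥ a+2, then the Postnikov system is unique up to (non-unique) isomorphism. -/
open CategoryTheory CategoryTheory.Pretriangulated CategoryTheory.Limits

universe v u

variable {T : Type u} [Category.{v} T] [Preadditive T] [HasZeroObject T] [HasShift T ℤ]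
  [∀ n : ℤ, (shiftFunctor T n).Additive] [Pretriangulated T]

/-- `X•` is a complex of length `n`: consecutive maps compose to zero. -/
def IsComplex (n : ℕ) (X : ℕ → T) (d : ∀ i, X i ⟶ X (i + 1)) : Prop :=
  ∀ i, i + 2 ≤ n → d i ≫ d (i + 1) = 0

/-- A Postnikov system built on the complex `X_0 → X_1 → ⋯ → X_n`
(only the indices `≤ n` are relevant). -/
structure PostnikovSystem (n : ℕ) (X : ℕ → T) (d : ∀ i, X i ⟶ X (i + 1)) where
  Y : ℕ → T
  iso0 : Y 0 ≅ X 0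
  f : ∀ i, Y i ⟶ X (i + 1)
  g : ∀ i, X (i + 1) ⟶ Y (i + 1)
  h : ∀ i, Y (i + 1) ⟶ (Y i)⟦(1 : ℤ)⟧
  dist : ∀ i, i < n → Triangle.mk (f i) (g i) (h i) ∈ distTriang T
  comm0 : 0 < n → iso0.inv ≫ f 0 = d 0
  comm : ∀ i, i + 1 < n → g i ≫ f (i + 1) = d (i + 1)

/-- A morphism of Postnikov systems lying over a morphism of complexes `φ`. -/
structure PostnikovHom {n : ℕ} {X : ℕ → T} {d : ∀ i, X i ⟶ X (i + 1)}
    {X' : ℕ → T} {d' : ∀ i, X' i ⟶ X' (i + 1)}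
    (P : PostnikovSystem n X d) (P' : PostnikovSystem n X' d')
    (φ : ∀ i, X i ⟶ X' i) where
  ψ : ∀ i, P.Y i ⟶ P'.Y i
  comm_iso0 : P.iso0.hom ≫ φ 0 = ψ 0 ≫ P'.iso0.hom
  comm_f : ∀ i, i < n → P.f i ≫ φ (i + 1) = ψ i ≫ P'.f i
  comm_g : ∀ i, i < n → φ (i + 1) ≫ P'.g i = P.g i ≫ ψ (i + 1)
  comm_h : ∀ i, i < n → ψ (i + 1) ≫ P'.h i = P.h i ≫ (ψ i)⟦(1 : ℤ)⟧'

/-- Auxiliary vanishing lemma: if `w ≫ e.hom` comes from a vanishing Hom group by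
shifting by one, then `w = 0`. -/
lemma hom_shift_one_zero {A B C' : T} (m : ℤ)
    (hv : ∀ v : A ⟶ B⟦m⟧, v = 0) (e : C' ≅ (B⟦m⟧)⟦(1 : ℤ)⟧)
    (w : A⟦(1 : ℤ)⟧ ⟶ C') : w = 0 := by
  obtain ⟨v, hv'⟩ := (shiftFunctor T (1 : ℤ)).map_surjective (w ≫ e.hom)
  have h0 : w ≫ e.hom = 0 := by rw [← hv', hv v, Functor.map_zero]
  calc w = (w ≫ e.hom) ≫ e.inv := by rw [Category.assoc, e.hom_inv_id, Category.comp_id]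
    _ = 0 := by rw [h0, zero_comp]

section Existence

variable (n : ℕ) (X : ℕ → T) (d : ∀ i, X i ⟶ X (i + 1))

/-- The data carried along the inductive construction of a Postnikov system:
the object `Y i`, the map `f i`, a vanishing property of `Y i`, and the fact
that `f i` composes to zero with the next differential. -/
structure PAux (i : ℕ) where
  Y : T
  f : Y ⟶ X (i + 1)
  van : ∀ (b : ℕ) (m : ℤ), b ≤ n → i + 3 ≤ b → m = (i : ℤ) - (b : ℤ) + 2 →
    ∀ u : Y ⟶ (X b)⟦m⟧, u = 0
  fd : i + 2 ≤ n → f ≫ d (i + 1) = 0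

variable {n X d}
variable (hcx : IsComplex n X d)
  (hvan : ∀ a b : ℕ, b ≤ n → a + 3 ≤ b →
      ∀ u : X a ⟶ (X b)⟦((a : ℤ) - (b : ℤ) + 2)⟧, u = 0)

/-- Base of the induction. -/
def pAuxZero : PAux n X d 0 where
  Y := X 0
  f := d 0
  van := by
    rintro b m hb hib rfl u
    exact hvan 0 b hb hib u
  fd h := hcx 0 h

include hcx hvan in
/-- The inductive step. -/
lemma pAux_step (i : ℕ) (A : PAux n X d i) :
    ∃ (B : PAux n X d (i + 1)) (g : X (i + 1) ⟶ B.Y) (h : B.Y ⟶ A.Y⟦(1 : ℤ)⟧),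
      (Triangle.mk A.f g h ∈ distTriang T) ∧ (i + 2 ≤ n → g ≫ B.f = d (i + 1)) := by
  obtain ⟨Z, g, h, hdist⟩ := Pretriangulated.distinguished_cocone_triangle A.f
  -- choose the next map `f'`
  have hlift : ∃ f' : Z ⟶ X (i + 1 + 1), i + 2 ≤ n → g ≫ f' = d (i + 1) := by
    by_cases hn : i + 2 ≤ n
    · obtain ⟨f', hf'⟩ := Triangle.yoneda_exact₂ _ hdist (d (i + 1)) (A.fd hn)
      exact ⟨f', fun _ => hf'.symm⟩
    · exact ⟨0, fun hn' => absurd hn' hn⟩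
  obtain ⟨f', hf'⟩ := hlift
  -- the vanishing property for `Z`
  have hvanZ : ∀ (b : ℕ) (m : ℤ), b ≤ n → (i + 1) + 3 ≤ b → m = ((i + 1 : ℕ) : ℤ) - (b : ℤ) + 2 →
      ∀ u : Z ⟶ (X b)⟦m⟧, u = 0 := by
    rintro b m hb hib rfl u
    have hgu : g ≫ u = 0 := hvan (i + 1) b hb (by omega) (g ≫ u)
    obtain ⟨w, hw⟩ := Triangle.yoneda_exact₃ _ hdist u hgu
    have hw0 : w = 0 := hom_shift_one_zero ((i : ℤ) - (b : ℤ) + 2)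
      (fun v => A.van b _ hb (by omega) rfl v)
      ((shiftFunctorAdd' T ((i : ℤ) - (b : ℤ) + 2) 1 (((i + 1 : ℕ) : ℤ) - (b : ℤ) + 2)
        (by push_cast; ring)).app (X b)) w
    rw [hw, hw0, comp_zero]; rfl
  -- `f'` composes to zero with the next differential
  have hfd : (i + 1) + 2 ≤ n → f' ≫ d (i + 1 + 1) = 0 := by
    intro hn
    have h1 : g ≫ (f' ≫ d (i + 1 + 1)) = 0 := by
      rw [← Category.assoc, hf' (by omega), hcx (i + 1) hn]
    obtain ⟨w, hw⟩ := Triangle.yoneda_exact₃ _ hdist _ h1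
    have hw0 : w = 0 := hom_shift_one_zero (-1)
      (fun v => A.van (i + 1 + 1 + 1) (-1) (by omega) (by omega) (by push_cast; ring) v)
      ((shiftFunctorCompIsoId T (-1 : ℤ) (1 : ℤ) (by omega)).app (X (i + 1 + 1 + 1))).symm w
    rw [hw, hw0, comp_zero]; rfl
  exact ⟨{ Y := Z, f := f', van := hvanZ, fd := hfd }, g, h, hdist, hf'⟩

/-- The chain of objects and maps, built by recursion using choice. -/
noncomputable def pChain : ∀ i : ℕ, PAux n X d i := fun i =>
  Nat.rec (pAuxZero hcx hvan) (fun j A => (pAux_step hcx hvan j A).choose) i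

/-- The specification of the chain. -/
lemma pChain_spec (i : ℕ) :
    ∃ (g : X (i + 1) ⟶ (pChain hcx hvan (i + 1)).Y)
      (h : (pChain hcx hvan (i + 1)).Y ⟶ ((pChain hcx hvan i).Y)⟦(1 : ℤ)⟧),
      (Triangle.mk (pChain hcx hvan i).f g h ∈ distTriang T) ∧
      (i + 2 ≤ n → g ≫ (pChain hcx hvan (i + 1)).f = d (i + 1)) :=
  (pAux_step hcx hvan i (pChain hcx hvan i)).choose_spec

/-- Existence of a Postnikov system. -/
noncomputable def pSystem : PostnikovSystem n X d where
  Y i := (pChain hcx hvan i).Y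
  iso0 := Iso.refl _
  f i := (pChain hcx hvan i).f
  g i := (pChain_spec hcx hvan i).choose
  h i := (pChain_spec hcx hvan i).choose_spec.choose
  dist i _ := (pChain_spec hcx hvan i).choose_spec.choose_spec.1
  comm0 _ := by
    show 𝟙 (X 0) ≫ d 0 = d 0
    exact Category.id_comp _
  comm i hi := (pChain_spec hcx hvan i).choose_spec.choose_spec.2 (by omega)

end Existence

section Uniqueness

variable {n : ℕ} {X : ℕ → T} {d : ∀ i, X i ⟶ X (i + 1)}

/-- Vanishing lemma for the objects of any Postnikov system, under the stronger
vanishing hypothesis. -/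
lemma PostnikovSystem.van
    (hvan2 : ∀ a b : ℕ, b ≤ n → a + 2 ≤ b →
      ∀ u : X a ⟶ (X b)⟦((a : ℤ) - (b : ℤ) + 1)⟧, u = 0)
    (P : PostnikovSystem n X d) :
    ∀ (i b : ℕ) (m : ℤ), b ≤ n → i + 2 ≤ b → m = (i : ℤ) - (b : ℤ) + 1 →
      ∀ u : P.Y i ⟶ (X b)⟦m⟧, u = 0 := by
  intro i
  induction i with
  | zero =>
    rintro b m hb hib rfl u
    have h0 : P.iso0.inv ≫ u = 0 := hvan2 0 b hb hib (P.iso0.inv ≫ u)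
    calc u = P.iso0.hom ≫ (P.iso0.inv ≫ u) := by rw [← Category.assoc, Iso.hom_inv_id,
            Category.id_comp]
      _ = 0 := by rw [h0, comp_zero]
  | succ i ih =>
    rintro b m hb hib rfl u
    have hin : i < n := by omega
    have hgu : P.g i ≫ u = 0 := hvan2 (i + 1) b hb (by omega) (P.g i ≫ u)
    obtain ⟨w, hw⟩ := Triangle.yoneda_exact₃ _ (P.dist i hin) u hgu
    have hw0 : w = 0 := hom_shift_one_zero ((i : ℤ) - (b : ℤ) + 1)
      (fun v => ih b _ hb (by omega) rfl v)
      ((shiftFunctorAdd' T ((i : ℤ) - (b : ℤ) + 1) 1 (((i + 1 : ℕ) : ℤ) - (b : ℤ) + 1)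
        (by push_cast; ring)).app (X b)) w
    rw [hw, hw0, comp_zero]; rfl

end Uniqueness

/-- if `T(X_a, X_b)_{-(b-a)+2} = 0` for all `b ≥ a + 3` then the
complex `X•` extends to a Postnikov system; if moreover
`T(X_a, X_b)_{-(b-a)+1} = 0` for all `b ≥ a + 2` then the Postnikov system is
unique up to (non-unique) isomorphism. -/
theorem postnikov_exists_and_unique (n : ℕ) (X : ℕ → T) (d : ∀ i, X i ⟶ X (i + 1))
    (hcx : IsComplex n X d)
    (hvan : ∀ a b : ℕ, b ≤ n → a + 3 ≤ b →
      ∀ u : X a ⟶ (X b)⟦((a : ℤ) - (b : ℤ) + 2)⟧, u = 0) :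
    Nonempty (PostnikovSystem n X d) ∧
    ((∀ a b : ℕ, b ≤ n → a + 2 ≤ b →
        ∀ u : X a ⟶ (X b)⟦((a : ℤ) - (b : ℤ) + 1)⟧, u = 0) →
      ∀ P Q : PostnikovSystem n X d,
        ∃ m : PostnikovHom P Q (fun i => 𝟙 (X i)), ∀ i, i ≤ n → IsIso (m.ψ i)) := by
  constructor
  · exact ⟨pSystem hcx hvan⟩
  · intro hvan2 P Q
    have van1 := P.van hvan2
    -- build the comparison maps by induction
    have key : ∀ k : ℕ, ∃ ψ : ∀ i, P.Y i ⟶ Q.Y i,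
        (P.iso0.hom = ψ 0 ≫ Q.iso0.hom) ∧
        (∀ i, i ≤ k → i ≤ n → IsIso (ψ i)) ∧
        (∀ i, i ≤ k → i < n → P.f i = ψ i ≫ Q.f i) ∧
        (∀ i, i < k → i < n → Q.g i = P.g i ≫ ψ (i + 1)) ∧
        (∀ i, i < k → i < n → ψ (i + 1) ≫ Q.h i = P.h i ≫ (ψ i)⟦(1 : ℤ)⟧') := by
      intro k
      induction k with
      | zero =>
        refine ⟨Function.update (fun i => (0 : P.Y i ⟶ Q.Y i)) 0 (P.iso0.hom ≫ Q.iso0.inv),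
          ?_, ?_, ?_, ?_, ?_⟩
        · rw [Function.update_self, Category.assoc, Iso.inv_hom_id, Category.comp_id]
        · intro i hi _
          have : i = 0 := by omega
          subst this
          rw [Function.update_self]
          infer_instance
        · intro i hi hin
          have : i = 0 := by omega
          subst this
          rw [Function.update_self, Category.assoc, Q.comm0 hin, ← P.comm0 hin,
            ← Category.assoc, Iso.hom_inv_id, Category.id_comp]
        · intro i hi; omega
        · intro i hi; omega
      | succ k ih =>
        obtain ⟨ψ, hiso0, hiso, hf, hg, hh⟩ := ih
        by_cases hk : k < n
        · -- extend the morphism through the next triangle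
          obtain ⟨c, hc1, hc2⟩ :
              ∃ c : P.Y (k + 1) ⟶ Q.Y (k + 1),
                P.g k ≫ c = 𝟙 (X (k + 1)) ≫ Q.g k ∧
                P.h k ≫ (ψ k)⟦(1 : ℤ)⟧' = c ≫ Q.h k :=
            Pretriangulated.complete_distinguished_triangle_morphism
              (Triangle.mk (P.f k) (P.g k) (P.h k)) (Triangle.mk (Q.f k) (Q.g k) (Q.h k))
              (P.dist k hk) (Q.dist k hk) (ψ k) (𝟙 _)
              (by show P.f k ≫ 𝟙 _ = ψ k ≫ Q.f k; rw [Category.comp_id]; exact hf k le_rfl hk)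
          rw [Category.id_comp] at hc1
          have hisoc : IsIso c := by
            have hiψ : IsIso (ψ k) := hiso k le_rfl (by omega)
            have := Pretriangulated.isIso₃_of_isIso₁₂
              (T := Triangle.mk (P.f k) (P.g k) (P.h k))
              (T' := Triangle.mk (Q.f k) (Q.g k) (Q.h k))
              { hom₁ := ψ k, hom₂ := 𝟙 _, hom₃ := c,
                comm₁ := by show P.f k ≫ 𝟙 _ = ψ k ≫ Q.f k; rw [Category.comp_id]; exact hf k le_rfl hk
                comm₂ := by show P.g k ≫ c = 𝟙 _ ≫ Q.g k; rw [Category.id_comp]; exact hc1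
                comm₃ := by show P.h k ≫ (ψ k)⟦(1 : ℤ)⟧' = c ≫ Q.h k; exact hc2 }
              (P.dist k hk) (Q.dist k hk) hiψ (by show IsIso (𝟙 (X (k + 1))); infer_instance)
            exact this
          set Ψ := Function.update ψ (k + 1) c with hΨ
          have hΨne : ∀ i, i ≠ k + 1 → Ψ i = ψ i := fun i hi =>
            Function.update_of_ne hi _ _
          have hΨeq : Ψ (k + 1) = c := Function.update_self _ _ _
          -- the new compatibility `P.f (k+1) = c ≫ Q.f (k+1)` when `k+1 < n`
          have hfnew : k + 1 < n → P.f (k + 1) = c ≫ Q.f (k + 1) := by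
            intro hk1
            have hdf : P.g k ≫ (P.f (k + 1) - c ≫ Q.f (k + 1)) = 0 := by
              rw [Preadditive.comp_sub, P.comm k hk1, ← Category.assoc, hc1, Q.comm k hk1,
                sub_self]
            obtain ⟨w, hw⟩ := Triangle.yoneda_exact₃ _ (P.dist k hk) _ hdf
            change P.f (k + 1) - c ≫ Q.f (k + 1) = _ at hw
            have hw0 : w = 0 := hom_shift_one_zero (-1)
              (fun v => van1 k (k + 1 + 1) (-1) (by omega) (by omega) (by push_cast; ring) v)
              ((shiftFunctorCompIsoId T (-1 : ℤ) (1 : ℤ) (by omega)).app (X (k + 1 + 1))).symm w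
            rw [hw0, comp_zero] at hw
            exact sub_eq_zero.mp hw
          refine ⟨Ψ, ?_, ?_, ?_, ?_, ?_⟩
          · rw [hΨne 0 (by omega)]; exact hiso0
          · intro i hi hin
            rcases Nat.lt_or_ge i (k + 1) with h' | h'
            · rw [hΨne i (by omega)]; exact hiso i (by omega) hin
            · have : i = k + 1 := by omega
              subst this
              rw [hΨeq]; exact hisoc
          · intro i hi hin
            rcases Nat.lt_or_ge i (k + 1) with h' | h'
            · rw [hΨne i (by omega)]; exact hf i (by omega) hin
            · have : i = k + 1 := by omega
              subst this
              rw [hΨeq]; exact hfnew hin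
          · intro i hi hin
            rcases Nat.lt_or_ge i k with h' | h'
            · rw [hΨne (i + 1) (by omega)]; exact hg i (by omega) hin
            · have : i = k := by omega
              subst this
              rw [hΨeq]; exact hc1.symm
          · intro i hi hin
            rcases Nat.lt_or_ge i k with h' | h'
            · rw [hΨne (i + 1) (by omega), hΨne i (by omega)]; exact hh i (by omega) hin
            · have : i = k := by omega
              subst this
              rw [hΨeq, hΨne i (by omega)]
              exact hc2.symm
        · -- `k ≥ n`: nothing to do
          refine ⟨ψ, hiso0, ?_, ?_, ?_, ?_⟩
          · intro i hi hin; exact hiso i (by omega) hin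
          · intro i hi hin; exact hf i (by omega) hin
          · intro i hi hin; exact hg i (by omega) hin
          · intro i hi hin; exact hh i (by omega) hin
    obtain ⟨ψ, hiso0, hiso, hf, hg, hh⟩ := key n
    refine ⟨{ ψ := ψ,
              comm_iso0 := by rw [Category.comp_id]; exact hiso0
              comm_f := fun i hi => by rw [Category.comp_id]; exact hf i (by omega) hi
              comm_g := fun i hi => by rw [Category.id_comp]; exact hg i hi hi
              comm_h := fun i hi => hh i hi hi }, ?_⟩
    intro i hi
    exact hiso i (by omega) hi
end

section
/- Let T be a triangulated category, and let X• and X'• be complexes X_0 → ⋯ → X_n and X'_0 → ⋯ → X'_n in T each extended to Postnikov systems. Given a morphism of complexes (f_i : X_i → X'_i), if T(X_a, X'_b)_{-(b-a)+1} = 0 for all b ≥ a+2, then the morphism of complexes extends (not necessarily uniquely) to a morphism of Postnikov systems. -/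
open CategoryTheory CategoryTheory.Pretriangulated CategoryTheory.Limits

universe v u

variable {T : Type u} [Category.{v} T] [Preadditive T] [HasZeroObject T] [HasShift T ℤ]
  [∀ n : ℤ, (shiftFunctor T n).Additive] [Pretriangulated T]

theorem postnikov_vanY {n : ℕ} {X : ℕ → T} {d : ∀ i, X i ⟶ X (i + 1)} (X' : ℕ → T)
    (P : PostnikovSystem n X d)
    (hvan : ∀ a b : ℕ, b ≤ n → a + 2 ≤ b →
      ∀ u : X a ⟶ (X' b)⟦((a : ℤ) - (b : ℤ) + 1)⟧, u = 0) :
    ∀ j b : ℕ, ∀ m : ℤ, b ≤ n → j + 2 ≤ b → m = (j : ℤ) - (b : ℤ) + 1 →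
      ∀ u : P.Y j ⟶ (X' b)⟦m⟧, u = 0 := by
  intro j
  induction j with
  | zero =>
      intro b m hb hb2 hm u
      subst hm
      have h0 := hvan 0 b hb hb2 (P.iso0.inv ≫ u)
      calc u = P.iso0.hom ≫ (P.iso0.inv ≫ u) := by simp
        _ = 0 := by rw [h0, comp_zero]
  | succ j ih =>
      intro b m hb hb2 hm u
      subst hm
      have hjn : j < n := by omega
      have hT := P.dist j hjn
      obtain ⟨w, hw⟩ := Triangle.yoneda_exact₃ _ hT u
        (hvan (j + 1) b hb (by omega) (P.g j ≫ u))
      have hv := ih b ((j : ℤ) - (b : ℤ) + 1) hb (by omega) rfl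
        ((shiftFunctorCompIsoId T (1 : ℤ) (-1) (by ring)).inv.app (P.Y j) ≫
          (shiftFunctor T (-1 : ℤ)).map w ≫
          (shiftFunctorAdd' T ((j : ℤ) + 1 - (b : ℤ) + 1) (-1) ((j : ℤ) - (b : ℤ) + 1)
            (by push_cast; ring)).inv.app (X' b))
      have hw0 : (shiftFunctor T (-1 : ℤ)).map w = 0 := by
        have h2 : (shiftFunctor T (-1 : ℤ)).map w =
            (shiftFunctorCompIsoId T (1 : ℤ) (-1) (by ring)).hom.app (P.Y j) ≫
            ((shiftFunctorCompIsoId T (1 : ℤ) (-1) (by ring)).inv.app (P.Y j) ≫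
              (shiftFunctor T (-1 : ℤ)).map w ≫
              (shiftFunctorAdd' T ((j : ℤ) + 1 - (b : ℤ) + 1) (-1) ((j : ℤ) - (b : ℤ) + 1)
                (by ring)).inv.app (X' b)) ≫
            (shiftFunctorAdd' T ((j : ℤ) + 1 - (b : ℤ) + 1) (-1) ((j : ℤ) - (b : ℤ) + 1)
              (by ring)).hom.app (X' b) := by
          simp
          rfl
        rw [h2, hv, zero_comp, comp_zero]; rfl
      have hwz : w = 0 := (shiftFunctor T (-1 : ℤ)).map_injective
        (by rw [hw0, Functor.map_zero])
      rw [hw, hwz, comp_zero]; rfl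

/-- a morphism of complexes extends (not necessarily uniquely) to a
morphism of Postnikov systems, provided `T(X_a, X'_b)_{-(b-a)+1} = 0` for all
`b ≥ a + 2`. -/
theorem postnikov_weak_functoriality (n : ℕ) (X X' : ℕ → T)
    (d : ∀ i, X i ⟶ X (i + 1)) (d' : ∀ i, X' i ⟶ X' (i + 1))
    (hcx : IsComplex n X d) (hcx' : IsComplex n X' d')
    (P : PostnikovSystem n X d) (P' : PostnikovSystem n X' d')
    (φ : ∀ i, X i ⟶ X' i)
    (hφ : ∀ i, i < n → d i ≫ φ (i + 1) = φ i ≫ d' i)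
    (hvan : ∀ a b : ℕ, b ≤ n → a + 2 ≤ b →
      ∀ u : X a ⟶ (X' b)⟦((a : ℤ) - (b : ℤ) + 1)⟧, u = 0) :
    Nonempty (PostnikovHom P P' φ) := by
  have vanY := postnikov_vanY X' P hvan
  have step : ∀ (i : ℕ) (ψi : P.Y i ⟶ P'.Y i), ∃ ψs : P.Y (i + 1) ⟶ P'.Y (i + 1),
      i < n → P.f i ≫ φ (i + 1) = ψi ≫ P'.f i →
        (φ (i + 1) ≫ P'.g i = P.g i ≫ ψs ∧ ψs ≫ P'.h i = P.h i ≫ ψi⟦(1 : ℤ)⟧' ∧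
          (i + 1 < n → P.f (i + 1) ≫ φ (i + 2) = ψs ≫ P'.f (i + 1))) := by
    intro i ψi
    by_cases hc : i < n ∧ P.f i ≫ φ (i + 1) = ψi ≫ P'.f i
    · obtain ⟨hi, hψ⟩ := hc
      obtain ⟨c₀, hc1, hc2⟩ := complete_distinguished_triangle_morphism _ _
        (P.dist i hi) (P'.dist i hi) ψi (φ (i + 1)) hψ
      have hc1' : P.g i ≫ c₀ = φ (i + 1) ≫ P'.g i := hc1
      have hc2' : (c₀ : P.Y (i + 1) ⟶ P'.Y (i + 1)) ≫ P'.h i = P.h i ≫ ψi⟦(1 : ℤ)⟧' :=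
        hc2.symm
      refine ⟨c₀, fun _ _ => ⟨hc1'.symm, hc2', fun hi1 => ?_⟩⟩
      have hδ : (Triangle.mk (P.f i) (P.g i) (P.h i)).mor₂ ≫
          (P.f (i + 1) ≫ φ (i + 2) -
            (c₀ ≫ P'.f (i + 1) : P.Y (i + 1) ⟶ X' (i + 2))) = 0 := by
        show P.g i ≫ (P.f (i + 1) ≫ φ (i + 2) -
          (c₀ ≫ P'.f (i + 1) : P.Y (i + 1) ⟶ X' (i + 2))) = 0
        rw [Preadditive.comp_sub, ← Category.assoc, P.comm i hi1, sub_eq_zero]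
        have e := congrArg (· ≫ P'.f (i + 1)) hc1'
        simp only [Category.assoc] at e
        exact (hφ (i + 1) hi1).trans (by rw [← P'.comm i hi1]; exact e.symm.trans (Category.assoc _ _ _))
      obtain ⟨w, hw⟩ := Triangle.yoneda_exact₃ _ (P.dist i hi) _ hδ
      have hv := vanY i (i + 2) (-1) (by omega) (by omega) (by push_cast; ring)
        ((shiftFunctorCompIsoId T (1 : ℤ) (-1) (by ring)).inv.app (P.Y i) ≫
          (shiftFunctor T (-1 : ℤ)).map w)
      have hw0 : (shiftFunctor T (-1 : ℤ)).map w = 0 := by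
        have h2 : (shiftFunctor T (-1 : ℤ)).map w =
            (shiftFunctorCompIsoId T (1 : ℤ) (-1) (by ring)).hom.app (P.Y i) ≫
            ((shiftFunctorCompIsoId T (1 : ℤ) (-1) (by ring)).inv.app (P.Y i) ≫
              (shiftFunctor T (-1 : ℤ)).map w) := by simp; rfl
        rw [h2, hv, comp_zero]; rfl
      have hwz : w = 0 := (shiftFunctor T (-1 : ℤ)).map_injective
        (by rw [hw0, Functor.map_zero])
      exact sub_eq_zero.mp (hw.trans (by rw [hwz, comp_zero]; rfl))
    · exact ⟨0, fun hi hψ => absurd ⟨hi, hψ⟩ hc⟩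
  choose nxt hnxt using step
  let Ψ : ∀ i, P.Y i ⟶ P'.Y i :=
    fun i => Nat.rec (P.iso0.hom ≫ φ 0 ≫ P'.iso0.inv) (fun i ih => nxt i ih) i
  have hΨs : ∀ i, Ψ (i + 1) = nxt i (Ψ i) := fun i => rfl
  have hΨ0 : Ψ 0 = P.iso0.hom ≫ φ 0 ≫ P'.iso0.inv := rfl
  have hf : ∀ i, i < n → P.f i ≫ φ (i + 1) = Ψ i ≫ P'.f i := by
    intro i
    induction i with
    | zero =>
        intro h0
        have e0 : P.iso0.inv ≫ P.f 0 = d 0 := P.comm0 h0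
        have e0' : P'.iso0.inv ≫ P'.f 0 = d' 0 := P'.comm0 h0
        have e1 : P.f 0 = P.iso0.hom ≫ d 0 := by rw [← e0, Iso.hom_inv_id_assoc]
        rw [hΨ0, e1, Category.assoc, hφ 0 h0, Category.assoc, Category.assoc, e0']
    | succ i ih =>
        intro h1
        rw [hΨs]
        exact (hnxt i (Ψ i) (by omega) (ih (by omega))).2.2 h1
  refine ⟨⟨Ψ, ?_, hf, ?_, ?_⟩⟩
  · rw [hΨ0]; simp
  · intro i hi
    rw [hΨs]
    exact (hnxt i (Ψ i) hi (hf i hi)).1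
  · intro i hi
    rw [hΨs]
    exact (hnxt i (Ψ i) hi (hf i hi)).2.1
end

section
/- Let T be a triangulated category and X• = (X_0 → ⋯ → X_n) a complex with n ≥ 3. If T(X_a, X_b)_{-(b-a)+2} = 0 whenever b - a ∈ [3, n-1], then the higher Toda bracket ⟨X•⟩ is nonempty. -/
open CategoryTheory CategoryTheory.Pretriangulated CategoryTheory.Limits

universe v u

variable {T : Type u} [Category.{v} T] [Preadditive T] [HasZeroObject T] [HasShift T ℤ]
  [∀ n : ℤ, (shiftFunctor T n).Additive] [Pretriangulated T]

/-- The canonical degree-`j` map `Y_j → Σ^j Y_0`, the composite of the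
degree-one maps of a Postnikov system. -/
noncomputable def PostnikovSystem.p {n : ℕ} {X : ℕ → T} {d : ∀ i, X i ⟶ X (i + 1)}
    (P : PostnikovSystem n X d) : ∀ j : ℕ, P.Y j ⟶ (P.Y 0)⟦(j : ℤ)⟧
  | 0 => (shiftFunctorZero T ℤ).inv.app (P.Y 0) ≫
      eqToHom (congrArg (fun t : ℤ => (P.Y 0)⟦t⟧) (by norm_num))
  | j + 1 => P.h j ≫ (P.p j)⟦(1 : ℤ)⟧' ≫
      (shiftFunctorAdd' T (j : ℤ) 1 ((j + 1 : ℕ) : ℤ) (by push_cast; ring)).inv.app (P.Y 0)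

/-- The higher Toda bracket of a complex `X_0 → ⋯ → X_{q+3}` (so of length
`n = q + 3 ≥ 3`): the set of all compositions `β ∘ α` in degree `-n + 2`,
where `Y` is a convolution of the truncated complex `(X_i)_{i=1}^{n-1}`
(a Postnikov system of length `q + 1` on it), `β : Y → X_n` extends `d_{n-1}`
along the inclusion `i : X_{n-1} → Y` and `α : X_0 → Σ^{-n+2} Y` lifts `d_0`
through the projection `p : Y → Σ^{n-2} X_1`. -/
noncomputable def todaBracket (q : ℕ) (X : ℕ → T) (d : ∀ i, X i ⟶ X (i + 1)) :
    Set (X 0 ⟶ (X (q + 3))⟦(-(q : ℤ) - 1)⟧) :=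
  { t | ∃ (P : PostnikovSystem (q + 1) (fun i => X (i + 1)) (fun i => d (i + 1)))
      (α : X 0 ⟶ (P.Y (q + 1))⟦(-(q : ℤ) - 1)⟧) (β : P.Y (q + 1) ⟶ X (q + 3)),
      P.g q ≫ β = d (q + 2) ∧
      α ≫ (P.p (q + 1) ≫ (P.iso0.hom)⟦((q + 1 : ℕ) : ℤ)⟧')⟦(-(q : ℤ) - 1)⟧' ≫
          (shiftFunctorCompIsoId T ((q + 1 : ℕ) : ℤ) (-(q : ℤ) - 1)
            (by push_cast; ring)).hom.app (X 1) = d 0 ∧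
      t = α ≫ β⟦(-(q : ℤ) - 1)⟧' }

/- ### Auxiliary constructions for the nonemptiness theorem -/

/-- If a morphism becomes zero after shifting back, it is zero. -/
private lemma toda_shift_cancel {A B : T} (m : ℤ) (v : A⟦m⟧ ⟶ B)
    (hv : (shiftFunctorCompIsoId T m (-m) (add_neg_cancel m)).inv.app A ≫ v⟦(-m : ℤ)⟧' = 0) :
    v = 0 := by
  have h1 : v⟦(-m : ℤ)⟧' = 0 := by
    rw [← cancel_epi ((shiftFunctorCompIsoId T m (-m) (add_neg_cancel m)).inv.app A), comp_zero]
    exact hv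
  apply (shiftFunctor T (-m)).map_injective
  rw [h1, Functor.map_zero]

section Toda

variable (q : ℕ) (X : ℕ → T) (d : ∀ i, X i ⟶ X (i + 1))

/-- A flexible version of the vanishing hypothesis. -/
private lemma toda_hvan_flex
    (hvan : ∀ a b : ℕ, b ≤ q + 3 → 3 ≤ b - a → b - a ≤ q + 2 →
      ∀ u : X a ⟶ (X b)⟦((a : ℤ) - (b : ℤ) + 2)⟧, u = 0)
    (a b : ℕ) (m : ℤ) (hb : b ≤ q + 3) (h3 : a + 3 ≤ b) (h2 : b ≤ a + q + 2)
    (hm : m = (a : ℤ) - (b : ℤ) + 2) : ∀ u : X a ⟶ (X b)⟦m⟧, u = 0 := by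
  subst hm
  exact fun u => hvan a b hb (by omega) (by omega) u

/-- One node of the inductively constructed Postnikov system. -/
structure TodaNode (i : ℕ) : Type (max u v) where
  Y : T
  f : Y ⟶ X (i + 2)
  van : ∀ (b : ℕ) (m : ℤ), b ≤ q + 3 → i + 4 ≤ b → m = (i : ℤ) + 3 - (b : ℤ) →
    ∀ u : Y ⟶ (X b)⟦m⟧, u = 0
  fd : i ≤ q → f ≫ d (i + 2) = 0

/-- The data connecting a node to the next one. -/
structure TodaStep (i : ℕ) (N : TodaNode q X d i) : Type (max u v) where
  next : TodaNode q X d (i + 1)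
  g : X (i + 2) ⟶ next.Y
  h : next.Y ⟶ N.Y⟦(1 : ℤ)⟧
  dist : Triangle.mk N.f g h ∈ distTriang T
  comm : i ≤ q → g ≫ next.f = d (i + 2)

variable (hcx : IsComplex (q + 3) X d)
  (hvan : ∀ a b : ℕ, b ≤ q + 3 → 3 ≤ b - a → b - a ≤ q + 2 →
      ∀ u : X a ⟶ (X b)⟦((a : ℤ) - (b : ℤ) + 2)⟧, u = 0)

include hvan in
/-- The vanishing property passes to cones. -/
private lemma toda_van_cone {i : ℕ} (N : TodaNode q X d i) {Z : T}
    (g : X (i + 2) ⟶ Z) (h : Z ⟶ N.Y⟦(1 : ℤ)⟧)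
    (mem : Triangle.mk N.f g h ∈ distTriang T) :
    ∀ (b : ℕ) (m : ℤ), b ≤ q + 3 → i + 1 + 4 ≤ b → m = ((i + 1 : ℕ) : ℤ) + 3 - (b : ℤ) →
      ∀ u : Z ⟶ (X b)⟦m⟧, u = 0 := by
  intro b m hb hib hm u
  have hgu : g ≫ u = 0 :=
    toda_hvan_flex q X hvan (i + 2) b m hb (by omega) (by omega)
      (by rw [hm]; push_cast; ring) _
  obtain ⟨v, hv⟩ := Triangle.yoneda_exact₃ _ mem u hgu
  suffices hv0 : v = 0 by rw [hv, hv0, comp_zero]; rfl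
  apply toda_shift_cancel
  rw [← cancel_mono ((shiftFunctorAdd' T m (-1) (m - 1) (by ring)).inv.app (X b)), zero_comp,
    Category.assoc]
  exact N.van b (m - 1) hb (by omega) (by rw [hm]; push_cast; ring) _

include hcx hvan in
private lemma toda_step_nonempty (i : ℕ) (N : TodaNode q X d i) :
    Nonempty (TodaStep q X d i N) := by
  obtain ⟨Z, g, h, mem⟩ := Pretriangulated.distinguished_cocone_triangle N.f
  have van' := toda_van_cone q X d hvan N g h mem
  by_cases hi : i ≤ q
  · obtain ⟨f', hf'⟩ : ∃ f' : Z ⟶ X (i + 2 + 1), d (i + 2) = g ≫ f' :=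
      Triangle.yoneda_exact₂ _ mem (d (i + 2)) (N.fd hi)
    have hf'' : d (i + 2) = g ≫ f' := hf'
    refine ⟨⟨⟨Z, f', van', ?_⟩, g, h, mem, fun _ => hf''.symm⟩⟩
    intro hi1
    have hz : g ≫ f' ≫ d (i + 1 + 2) = 0 := by
      rw [← Category.assoc, ← hf'']
      exact hcx (i + 2) (by omega)
    obtain ⟨v, hv⟩ := Triangle.yoneda_exact₃ _ mem (f' ≫ d (i + 1 + 2)) hz
    suffices hv0 : v = 0 by rw [hv0, comp_zero] at hv; exact hv
    apply toda_shift_cancel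
    exact N.van (i + 4) (-1) (by omega) (by omega) (by push_cast; ring) _
  · exact ⟨⟨⟨Z, 0, van', fun _ => zero_comp⟩, g, h, mem, fun hc => absurd hc hi⟩⟩

/-- The base node. -/
private def todaNodeZero : TodaNode q X d 0 where
  Y := X 1
  f := d 1
  van := fun b m hb hib hm u =>
    toda_hvan_flex q X hvan 1 b m hb (by omega) (by omega) (by rw [hm]; push_cast; ring) u
  fd := fun _ => hcx 1 (by omega)

/-- The tower of nodes. -/
private noncomputable def todaPk : ∀ i : ℕ, TodaNode q X d i
  | 0 => todaNodeZero q X d hcx hvan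
  | i + 1 => (Classical.choice (toda_step_nonempty q X d hcx hvan i (todaPk i))).next

/-- The connecting data. -/
private noncomputable def todaConn (i : ℕ) : TodaStep q X d i (todaPk q X d hcx hvan i) :=
  Classical.choice (toda_step_nonempty q X d hcx hvan i _)

/-- The Postnikov system on the truncated complex. -/
private noncomputable def todaSys :
    PostnikovSystem (q + 1) (fun i => X (i + 1)) (fun i => d (i + 1)) where
  Y i := (todaPk q X d hcx hvan i).Y
  iso0 := Iso.refl _
  f i := (todaPk q X d hcx hvan i).f
  g i := by exact (todaConn q X d hcx hvan i).g
  h i := by exact (todaConn q X d hcx hvan i).h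
  dist i _ := (todaConn q X d hcx hvan i).dist
  comm0 _ := by
    show (Iso.refl _).inv ≫ d 1 = d 1
    simp
  comm i _ := (todaConn q X d hcx hvan i).comm (by omega)

include hcx hvan in
private lemma toda_lift : ∀ j : ℕ, j ≤ q + 1 → ∀ (k : ℤ) (hk : ((j : ℕ) : ℤ) + k = 0),
    ∃ α : X 0 ⟶ ((todaSys q X d hcx hvan).Y j)⟦k⟧,
      α ≫ ((todaSys q X d hcx hvan).p j ≫
          ((todaSys q X d hcx hvan).iso0.hom)⟦(j : ℤ)⟧')⟦k⟧' ≫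
        (shiftFunctorCompIsoId T (j : ℤ) k hk).hom.app (X 1) = d 0 := by
  intro j
  induction j with
  | zero =>
    intro _ k hk
    obtain rfl : k = 0 := by push_cast at hk; omega
    set P := todaSys q X d hcx hvan with hP
    have hp0 : P.p 0 = (shiftFunctorZero T ℤ).inv.app (P.Y 0) ≫
        eqToHom (congrArg (fun t : ℤ => (P.Y 0)⟦t⟧) (by norm_num : (0 : ℤ) = ((0 : ℕ) : ℤ))) :=
      rfl
    have h1 : IsIso (P.p 0) := by rw [hp0]; infer_instance
    set c := (P.p 0 ≫ (P.iso0.hom)⟦((0 : ℕ) : ℤ)⟧')⟦(0 : ℤ)⟧' ≫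
        (shiftFunctorCompIsoId T ((0 : ℕ) : ℤ) 0 hk).hom.app (X 1) with hc
    have h2 : IsIso c := by rw [hc]; infer_instance
    exact ⟨d 0 ≫ inv c, by simp⟩
  | succ j IH =>
    intro hj k hk
    set P := todaSys q X d hcx hvan with hP
    have hk' : ((j : ℕ) : ℤ) + (k + 1) = 0 := by push_cast at hk ⊢; omega
    obtain ⟨α, hα⟩ := IH (by omega) (k + 1) hk'
    -- the obstruction vanishes
    have hobs0 : α ≫ (P.f j)⟦(k + 1 : ℤ)⟧' = 0 := by
      rcases Nat.eq_zero_or_pos j with rfl | hjpos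
      · -- degree-zero case: use `d 0 ≫ d 1 = 0`
        have h00 : (0 : ℤ) = ((0 : ℕ) : ℤ) := by norm_num
        set ζIso : 𝟭 T ≅ shiftFunctor T ((0 : ℕ) : ℤ) :=
          (shiftFunctorZero T ℤ).symm ≪≫ eqToIso (congrArg (shiftFunctor T) h00) with hζ
        set ΘIso : 𝟭 T ⋙ shiftFunctor T (k + 1) ≅ 𝟭 T :=
          Functor.isoWhiskerRight ζIso (shiftFunctor T (k + 1)) ≪≫
            shiftFunctorCompIsoId T ((0 : ℕ) : ℤ) (k + 1) hk' with hΘ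
        have hα2 : α ≫ (shiftFunctor T (k + 1)).map
            ((ζIso.hom.app (X 1) : X 1 ⟶ _) ≫
              (shiftFunctor T ((0 : ℕ) : ℤ)).map (𝟙 (X 1))) ≫
            (shiftFunctorCompIsoId T ((0 : ℕ) : ℤ) (k + 1) hk').hom.app (X 1) = d 0 := hα
        simp only [CategoryTheory.Functor.map_id, Category.comp_id] at hα2
        erw [Category.comp_id] at hα2
        have hα3 : α ≫ ΘIso.hom.app (X 1) = d 0 := by
          rw [hΘ]; exact hα2
        have hinv : inv (ΘIso.hom.app (X 1)) = ΘIso.inv.app (X 1) := by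
          apply IsIso.inv_eq_of_hom_inv_id
          exact ΘIso.hom_inv_id_app (X 1)
        have nat : ΘIso.inv.app (X 1) ≫ (d 1)⟦(k + 1 : ℤ)⟧' = d 1 ≫ ΘIso.inv.app (X 2) := by
          simpa using (ΘIso.inv.naturality (d 1)).symm
        have hαeq : α = d 0 ≫ ΘIso.inv.app (X 1) := (Iso.eq_comp_inv (ΘIso.app (X 1))).mpr hα3
        suffices hgoal : α ≫ (shiftFunctor T (k + 1)).map (d 1) = 0 from hgoal
        have e : (d 0 ≫ ΘIso.inv.app (X 1)) ≫ (d 1)⟦(k + 1 : ℤ)⟧' = 0 := by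
          rw [Category.assoc, nat]
          slice_lhs 1 2 => rw [hcx 0 (by omega)]
          simp
        rw [hαeq]; exact e
      · exact toda_hvan_flex q X hvan 0 (j + 1 + 1) (k + 1) (by omega) (by omega) (by omega)
          (by push_cast at hk ⊢; omega) _
    have pfa : ((j : ℕ) : ℤ) + 1 = ((j + 1 : ℕ) : ℤ) := by push_cast; ring
    have pfb : (1 : ℤ) + k = k + 1 := by ring
    have pfc : (k + 1) + (-k) = (1 : ℤ) := by ring
    have pfd : (-k) + k = (0 : ℤ) := by ring
    have pfe : (k + 1) + (0 : ℤ) = k + 1 := add_zero _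
    have hobs : (α⟦(-k : ℤ)⟧' ≫
        (shiftFunctorAdd' T (k + 1) (-k) 1 pfc).inv.app (P.Y j)) ≫
          (P.f j)⟦(1 : ℤ)⟧' = 0 := by
      rw [Category.assoc, ← (shiftFunctorAdd' T (k + 1) (-k) 1 pfc).inv.naturality (P.f j)]
      dsimp only [Functor.comp_map]
      rw [← Functor.map_comp_assoc, hobs0, Functor.map_zero, zero_comp]
    obtain ⟨bb, hbb⟩ : ∃ bb : (X 0)⟦(-k : ℤ)⟧ ⟶ P.Y (j + 1),
        α⟦(-k : ℤ)⟧' ≫ (shiftFunctorAdd' T (k + 1) (-k) 1 pfc).inv.app (P.Y j) = bb ≫ P.h j :=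
      Triangle.coyoneda_exact₁ _ (P.dist j (by omega))
      (α⟦(-k : ℤ)⟧' ≫ (shiftFunctorAdd' T (k + 1) (-k) 1 pfc).inv.app (P.Y j)) hobs
    have hbb' : α⟦(-k : ℤ)⟧' ≫ (shiftFunctorAdd' T (k + 1) (-k) 1 pfc).inv.app (P.Y j) =
        bb ≫ P.h j := hbb
    refine ⟨(shiftFunctorCompIsoId T (-k) k pfd).inv.app (X 0) ≫ bb⟦(k : ℤ)⟧', ?_⟩
    have hpj : P.p (j + 1) = P.h j ≫ (P.p j)⟦(1 : ℤ)⟧' ≫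
        (shiftFunctorAdd' T (j : ℤ) 1 ((j + 1 : ℕ) : ℤ) pfa).inv.app (P.Y 0) := rfl
    have ehom : ∀ (a b : ℤ) (h : a + b = 0) (B : T),
        (shiftFunctorCompIsoId T a b h).hom.app B =
          (shiftFunctorAdd' T a b 0 h).inv.app B ≫ (shiftFunctorZero T ℤ).hom.app B :=
      fun _ _ _ _ => rfl
    have einv : ∀ (a b : ℤ) (h : a + b = 0) (B : T),
        (shiftFunctorCompIsoId T a b h).inv.app B =
          (shiftFunctorZero T ℤ).inv.app B ≫ (shiftFunctorAdd' T a b 0 h).hom.app B :=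
      fun _ _ _ _ => rfl
    -- coherence 1
    have s1 : ((shiftFunctorAdd' T (j : ℤ) 1 ((j + 1 : ℕ) : ℤ) pfa).inv.app (X 1))⟦(k : ℤ)⟧' ≫
        (shiftFunctorCompIsoId T ((j + 1 : ℕ) : ℤ) k hk).hom.app (X 1) =
        (shiftFunctorAdd' T 1 k (k + 1) pfb).inv.app ((X 1)⟦(j : ℤ)⟧) ≫
          (shiftFunctorCompIsoId T (j : ℤ) (k + 1) hk').hom.app (X 1) := by
      rw [ehom, ehom, ← Category.assoc, ← Category.assoc]
      congr 1
      exact shiftFunctorAdd'_assoc_inv_app (j : ℤ) 1 k ((j + 1 : ℕ) : ℤ) (k + 1) 0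
        pfa pfb (by push_cast at hk ⊢; omega) (X 1)
    -- naturality of A1 at iso0
    have s2 : (shiftFunctorAdd' T (j : ℤ) 1 ((j + 1 : ℕ) : ℤ) pfa).inv.app (P.Y 0) ≫
        (P.iso0.hom)⟦((j + 1 : ℕ) : ℤ)⟧' =
        ((P.iso0.hom)⟦(j : ℤ)⟧')⟦(1 : ℤ)⟧' ≫
          (shiftFunctorAdd' T (j : ℤ) 1 ((j + 1 : ℕ) : ℤ) pfa).inv.app (X 1) := by
      simpa using
        ((shiftFunctorAdd' T (j : ℤ) 1 ((j + 1 : ℕ) : ℤ) pfa).inv.naturality (P.iso0.hom)).symm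
    -- naturality of A2 at r
    have s3 : (((P.p j ≫ (P.iso0.hom)⟦(j : ℤ)⟧')⟦(1 : ℤ)⟧')⟦(k : ℤ)⟧') ≫
        (shiftFunctorAdd' T 1 k (k + 1) pfb).inv.app ((X 1)⟦(j : ℤ)⟧) =
        (shiftFunctorAdd' T 1 k (k + 1) pfb).inv.app (P.Y j) ≫
          (P.p j ≫ (P.iso0.hom)⟦(j : ℤ)⟧')⟦(k + 1 : ℤ)⟧' := by
      simpa using
        (shiftFunctorAdd' T 1 k (k + 1) pfb).inv.naturality (P.p j ≫ (P.iso0.hom)⟦(j : ℤ)⟧')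
    -- coherence 2
    have s4 : (shiftFunctorCompIsoId T (-k) k pfd).inv.app ((P.Y j)⟦(k + 1 : ℤ)⟧) ≫
        ((shiftFunctorAdd' T (k + 1) (-k) 1 pfc).inv.app (P.Y j))⟦(k : ℤ)⟧' ≫
          (shiftFunctorAdd' T 1 k (k + 1) pfb).inv.app (P.Y j) = 𝟙 _ := by
      rw [einv,
        shiftFunctorAdd'_assoc_inv_app (k + 1) (-k) k 1 0 (k + 1) pfc pfd (by ring) (P.Y j),
        shiftFunctorAdd'_add_zero_inv_app]
      simp
    -- naturality of C0 at α
    have s5 : (shiftFunctorCompIsoId T (-k) k pfd).inv.app (X 0) ≫ (α⟦(-k : ℤ)⟧')⟦(k : ℤ)⟧' =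
        α ≫ (shiftFunctorCompIsoId T (-k) k pfd).inv.app ((P.Y j)⟦(k + 1 : ℤ)⟧) := by
      simpa using ((shiftFunctorCompIsoId T (-k) k pfd).inv.naturality α).symm
    rw [hpj]
    simp only [Functor.map_comp, Category.assoc]
    slice_lhs 5 6 => rw [← Functor.map_comp, s2, Functor.map_comp]
    slice_lhs 6 7 => rw [s1]
    slice_lhs 4 5 => rw [← Functor.map_comp, ← Functor.map_comp]
    slice_lhs 4 5 => rw [s3]
    slice_lhs 2 3 => rw [← Functor.map_comp, ← hbb', Functor.map_comp]
    slice_lhs 1 2 => rw [s5]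
    slice_lhs 2 4 => rw [s4]
    simpa using hα

end Toda

/-- if `T(X_a, X_b)_{-(b-a)+2} = 0` whenever `b - a ∈ [3, n-1]`
(where `n = q + 3 ≥ 3`), then the higher Toda bracket `⟨X•⟩` is nonempty. -/
theorem todaBracket_nonempty (q : ℕ) (X : ℕ → T) (d : ∀ i, X i ⟶ X (i + 1))
    (hcx : IsComplex (q + 3) X d)
    (hvan : ∀ a b : ℕ, b ≤ q + 3 → 3 ≤ b - a → b - a ≤ q + 2 →
      ∀ u : X a ⟶ (X b)⟦((a : ℤ) - (b : ℤ) + 2)⟧, u = 0) :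
    (todaBracket q X d).Nonempty := by
  obtain ⟨α, hα⟩ := toda_lift q X d hcx hvan (q + 1) (le_refl _) (-(q : ℤ) - 1)
    (by push_cast; ring)
  exact ⟨α ≫ ((todaPk q X d hcx hvan (q + 1)).f)⟦(-(q : ℤ) - 1)⟧',
    todaSys q X d hcx hvan, α, (todaPk q X d hcx hvan (q + 1)).f,
    (todaConn q X d hcx hvan q).comm (le_refl q), hα, rfl⟩
end
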